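/- Let q ∈ ℂ with |q| < 1 and define ϑ₁(z) = 2 Σ_{n=0}^∞ (−1)ⁿ q^{(n+1/2)²} sin((2n+1)z) and ϑ₄(z) = 1 + 2 Σ_{n=1}^∞ (−1)ⁿ q^{n²} cos(2nz). Then for all u, v, a ∈ ℂ: ϑ₄(u)ϑ₄(v)ϑ₄(a−u)ϑ₄(a−v) − ϑ₁(u)ϑ₁(v)ϑ₁(a−u)ϑ₁(a−v) = ϑ₄(0)·ϑ₄(a)·ϑ₄(u−v)·ϑ₄(a−u−v). -/

import Mathlib

open Complex

/-- The Jacobi theta function `ϑ₁(z) = 2 Σ_{n≥0} (−1)ⁿ q^{(n+1/2)²} sin((2n+1)z)`. -/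
noncomputable def thetaJ₁ (q z : ℂ) : ℂ :=
  2 * ∑' n : ℕ, (-1 : ℂ) ^ n * q ^ (((n : ℂ) + 1/2) ^ 2) * Complex.sin ((2 * (n : ℂ) + 1) * z)

/-- The Jacobi theta function `ϑ₄(z) = 1 + 2 Σ_{n≥1} (−1)ⁿ q^{n²} cos(2nz)`. -/
noncomputable def thetaJ₄ (q z : ℂ) : ℂ :=
  1 + 2 * ∑' n : ℕ, (-1 : ℂ) ^ (n + 1) * q ^ (((n : ℂ) + 1) ^ 2) *
    Complex.cos (2 * ((n : ℂ) + 1) * z)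

noncomputable section ThetaAux

namespace ThetaAux

/-- master term: `q^((k/2)^2) * exp(k i z)` -/
def mt (q z : ℂ) (k : ℤ) : ℂ := q ^ (((k : ℂ)/2)^2) * Complex.exp ((k : ℂ) * I * z)

/-- signed term of single theta series -/
def tt (q z : ℂ) (ε n : ℤ) : ℂ := (-1 : ℂ)^n * mt q z (2*n+ε)

lemma norm_mt (q : ℂ) (hq0 : q ≠ 0) (z : ℂ) (k : ℤ) :
    ‖mt q z k‖ = ‖q‖ ^ (((k:ℝ)/2)^2) * Real.exp ((k:ℝ) * (-z.im)) := by
  have h1 : (((k : ℂ)/2)^2) = ((((k:ℝ)/2)^2 : ℝ) : ℂ) := by push_cast; ring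
  rw [mt, norm_mul, h1, Complex.norm_cpow_real, Complex.norm_exp]
  congr 2
  simp [Complex.mul_re, Complex.mul_im]

lemma norm_tt (q : ℂ) (hq0 : q ≠ 0) (z : ℂ) (ε n : ℤ) :
    ‖tt q z ε n‖ = ‖q‖ ^ ((((2*n+ε:ℤ):ℝ)/2)^2)
        * Real.exp (((2*n+ε:ℤ):ℝ) * (-z.im)) := by
  rw [tt, norm_mul, norm_zpow, norm_neg, norm_one, one_zpow, one_mul, norm_mt q hq0]

/-- ratio-test summability over ℕ -/
lemma summable_nat_core {r : ℝ} (h0 : 0 < r) (h1 : r < 1) (c d : ℝ) :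
    Summable fun n : ℕ => r ^ (((n:ℝ)+c)^2) * Real.exp ((n:ℝ)*d) := by
  have hpos : ∀ n : ℕ, 0 < r ^ (((n:ℝ)+c)^2) * Real.exp ((n:ℝ)*d) := fun n =>
    mul_pos (Real.rpow_pos_of_pos h0 _) (Real.exp_pos _)
  apply summable_of_ratio_test_tendsto_lt_one (l := 0) one_pos
  · exact Filter.Eventually.of_forall fun n => (hpos n).ne'
  · have key : ∀ n : ℕ, ‖r ^ ((((n+1):ℕ):ℝ)+c)^2 * Real.exp ((((n+1):ℕ):ℝ)*d)‖
        / ‖r ^ (((n:ℝ)+c)^2) * Real.exp ((n:ℝ)*d)‖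
        = (r^2)^n * (r ^ (1+2*c) * Real.exp d) := by
      intro n
      rw [Real.norm_of_nonneg (hpos (n+1)).le, Real.norm_of_nonneg (hpos n).le]
      rw [mul_div_mul_comm, ← Real.rpow_sub h0, ← Real.exp_sub]
      have e1 : ((((n+1):ℕ):ℝ)+c)^2 - ((n:ℝ)+c)^2 = 2*(n:ℝ) + (1+2*c) := by
        push_cast; ring
      have e2 : (((n+1):ℕ):ℝ)*d - (n:ℝ)*d = d := by push_cast; ring
      rw [e1, e2, Real.rpow_add h0, ← Real.rpow_natCast (r^2) n, ← Real.rpow_natCast r 2,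
        ← Real.rpow_mul h0.le]
      push_cast
      ring_nf
    simp only [key]
    have hr2 : |r^2| < 1 := by
      rw [_root_.abs_of_nonneg (sq_nonneg r)]; nlinarith
    simpa using (tendsto_pow_atTop_nhds_zero_of_abs_lt_one hr2).mul_const
      (r ^ (1+2*c) * Real.exp d)

/-- summability over ℤ -/
lemma summable_core {r : ℝ} (h0 : 0 < r) (h1 : r < 1) (c d : ℝ) :
    Summable fun n : ℤ => r ^ (((n:ℝ)+c)^2) * Real.exp ((n:ℝ)*d) := by
  apply Summable.of_nat_of_neg_add_one
  · have := summable_nat_core h0 h1 c d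
    apply this.congr
    intro n; norm_num
  · have := (summable_nat_core h0 h1 (1-c) (-d)).mul_right (Real.exp (-d))
    apply this.congr
    intro n
    have e1 : (((-((n:ℤ)+1)):ℤ):ℝ) + c = -(((n:ℝ)+(1-c))) := by push_cast; ring
    have e2 : ((((-((n:ℤ)+1)):ℤ)):ℝ) * d = (n:ℝ)*(-d) + (-d) := by push_cast; ring
    rw [e1, e2, neg_sq, Real.exp_add]
    ring

lemma summable_norm_tt (q : ℂ) (hq0 : q ≠ 0) (hq : ‖q‖ < 1) (z : ℂ) (ε : ℤ) :
    Summable fun n : ℤ => ‖tt q z ε n‖ := by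
  have h0 : 0 < ‖q‖ := norm_pos_iff.mpr hq0
  have := (summable_core h0 hq ((ε:ℝ)/2) (-2*z.im)).mul_right (Real.exp ((ε:ℝ) * (-z.im)))
  apply this.congr
  intro n
  rw [norm_tt q hq0]
  have e1 : (((2*n+ε:ℤ):ℝ)/2)^2 = ((n:ℝ)+(ε:ℝ)/2)^2 := by push_cast; ring
  have e2 : ((2*n+ε:ℤ):ℝ) * (-z.im) = (n:ℝ)*(-2*z.im) + (ε:ℝ)*(-z.im) := by push_cast; ring
  rw [e1, e2, Real.exp_add]
  ring

lemma summable_tt (q : ℂ) (hq0 : q ≠ 0) (hq : ‖q‖ < 1) (z : ℂ) (ε : ℤ) :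
    Summable fun n : ℤ => tt q z ε n :=
  (summable_norm_tt q hq0 hq z ε).of_norm

variable (q z : ℂ)

lemma tt_zero : tt q z 0 0 = 1 := by
  simp [tt, mt]

lemma tt4_pair (n : ℕ) :
    tt q z 0 ((n:ℤ)+1) + tt q z 0 (-((n:ℤ)+1)) =
      2 * ((-1 : ℂ) ^ ((n:ℕ) + 1) * q ^ (((n : ℂ) + 1) ^ 2) *
        Complex.cos (2 * ((n : ℂ) + 1) * z)) := by
  rw [tt, tt, mt, mt]
  have hs1 : (-1 : ℂ)^((n:ℤ)+1) = (-1 : ℂ)^((n:ℕ)+1) := by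
    rw [show ((n:ℤ)+1) = (((n+1 : ℕ)):ℤ) by push_cast; ring, zpow_natCast]
  have hs2 : (-1 : ℂ)^(-((n:ℤ)+1)) = (-1 : ℂ)^((n:ℕ)+1) := by
    rw [zpow_neg, ← hs1, ← inv_zpow, inv_neg, inv_one]
  have he1 : (((2*((n:ℤ)+1)+0 : ℤ) : ℂ)/2)^2 = ((n : ℂ) + 1) ^ 2 := by push_cast; ring
  have he2 : (((2*(-((n:ℤ)+1))+0 : ℤ) : ℂ)/2)^2 = ((n : ℂ) + 1) ^ 2 := by push_cast; ring
  rw [hs1, hs2, he1, he2]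
  have hc : Complex.cos (2 * ((n : ℂ) + 1) * z) =
      (Complex.exp ((2 * ((n : ℂ) + 1) * z) * I) + Complex.exp (-(2 * ((n : ℂ) + 1) * z) * I))/2 := by
    rw [Complex.cos]
  rw [hc]
  have ha1 : (((2*((n:ℤ)+1)+0 : ℤ)) : ℂ) * I * z = (2 * ((n : ℂ) + 1) * z) * I := by push_cast; ring
  have ha2 : (((2*(-((n:ℤ)+1))+0 : ℤ)) : ℂ) * I * z = (-(2 * ((n : ℂ) + 1) * z)) * I := by push_cast; ring
  rw [ha1, ha2]
  ring

lemma tt1_pair (n : ℕ) :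
    tt q z 1 (n:ℤ) + tt q z 1 (-((n:ℤ)+1)) =
      2 * I * ((-1 : ℂ) ^ (n:ℕ) * q ^ (((n : ℂ) + 1/2) ^ 2) *
        Complex.sin ((2 * (n : ℂ) + 1) * z)) := by
  rw [tt, tt, mt, mt]
  have hs1 : (-1 : ℂ)^((n:ℤ)) = (-1 : ℂ)^(n:ℕ) := zpow_natCast _ _
  have hs2 : (-1 : ℂ)^(-((n:ℤ)+1)) = -(-1 : ℂ)^(n:ℕ) := by
    have h : (-1 : ℂ)^((n:ℤ)+1) = -(-1 : ℂ)^(n:ℕ) := by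
      rw [zpow_add₀ (by norm_num : (-1:ℂ) ≠ 0), zpow_natCast, zpow_one]; ring
    rw [zpow_neg, h, inv_neg, ← inv_pow, inv_neg, inv_one]
  have he1 : (((2*(n:ℤ)+1 : ℤ) : ℂ)/2)^2 = ((n : ℂ) + 1/2) ^ 2 := by push_cast; ring
  have he2 : (((2*(-((n:ℤ)+1))+1 : ℤ) : ℂ)/2)^2 = ((n : ℂ) + 1/2) ^ 2 := by push_cast; ring
  rw [hs1, hs2, he1, he2]
  have hs : Complex.sin ((2 * (n : ℂ) + 1) * z) =
      (Complex.exp (-((2 * (n : ℂ) + 1) * z) * I) - Complex.exp (((2 * (n : ℂ) + 1) * z) * I)) * I / 2 := by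
    rw [Complex.sin]
  rw [hs]
  have ha1 : (((2*(n:ℤ)+1 : ℤ)) : ℂ) * I * z = ((2 * (n : ℂ) + 1) * z) * I := by push_cast; ring
  have ha2 : (((2*(-((n:ℤ)+1))+1 : ℤ)) : ℂ) * I * z = (-((2 * (n : ℂ) + 1) * z)) * I := by push_cast; ring
  rw [ha1, ha2]
  have : I * I = -1 := Complex.I_mul_I
  field_simp
  ring_nf
  rw [Complex.I_sq]
  ring

end ThetaAux

namespace ThetaAux

lemma theta4_even (q z : ℂ) : thetaJ₄ q (-z) = thetaJ₄ q z := by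
  simp only [thetaJ₄, mul_neg, Complex.cos_neg]

lemma theta4_eq (q : ℂ) (hq0 : q ≠ 0) (hq : ‖q‖ < 1) (z : ℂ) :
    thetaJ₄ q z = ∑' n : ℤ, tt q z 0 n := by
  have hS := summable_tt q hq0 hq z 0
  have h1 : Summable fun n : ℕ => tt q z 0 (n:ℤ) :=
    hS.comp_injective (fun a b h => by omega)
  have h2 : Summable fun n : ℕ => tt q z 0 (-((n:ℤ)+1)) :=
    hS.comp_injective (fun a b h => by omega)
  have h3 : Summable fun n : ℕ => tt q z 0 ((n:ℤ)+1) :=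
    hS.comp_injective (fun a b h => by omega)
  rw [tsum_of_nat_of_neg_add_one h1 h2, h1.tsum_eq_zero_add]
  rw [show tt q z 0 ((0:ℕ):ℤ) = 1 by simpa using tt_zero q z]
  rw [show ∑' n:ℕ, tt q z 0 (((n+1:ℕ)):ℤ) = ∑' n:ℕ, tt q z 0 ((n:ℤ)+1) from
    tsum_congr (fun n => by norm_num)]
  rw [add_assoc, ← h3.tsum_add h2]
  rw [tsum_congr (fun n => tt4_pair q z n), tsum_mul_left]
  rfl

lemma theta1_eq (q : ℂ) (hq0 : q ≠ 0) (hq : ‖q‖ < 1) (z : ℂ) :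
    thetaJ₁ q z = -I * ∑' n : ℤ, tt q z 1 n := by
  have hS := summable_tt q hq0 hq z 1
  have h1 : Summable fun n : ℕ => tt q z 1 (n:ℤ) :=
    hS.comp_injective (fun a b h => by omega)
  have h2 : Summable fun n : ℕ => tt q z 1 (-((n:ℤ)+1)) :=
    hS.comp_injective (fun a b h => by omega)
  rw [tsum_of_nat_of_neg_add_one h1 h2, ← h1.tsum_add h2]
  rw [tsum_congr (fun n => tt1_pair q z n), tsum_mul_left]
  rw [thetaJ₁]
  generalize (∑' (n : ℕ), (-1 : ℂ) ^ n * q ^ (((n : ℂ) + 1/2) ^ 2) *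
    Complex.sin ((2 * (n : ℂ) + 1) * z)) = S
  rw [show -I * (2 * I * S) = -(I*I) * (2*S) by ring, Complex.I_mul_I]
  ring

end ThetaAux

namespace ThetaAux

abbrev ι4 := (ℤ × ℤ) × (ℤ × ℤ)

lemma hasSum_sumType {α β : Type*} {f : α ⊕ β → ℂ} {A B : ℂ}
    (ha : HasSum (fun x => f (.inl x)) A) (hb : HasSum (fun y => f (.inr y)) B) :
    HasSum f (A + B) := by
  have h1 : HasSum (f ∘ (Subtype.val : Set.range (Sum.inl : α → α ⊕ β) → α ⊕ β)) A := by
    rw [← (Equiv.ofInjective _ (Sum.inl_injective : Function.Injective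
      (Sum.inl : α → α ⊕ β))).hasSum_iff]
    exact ha
  have h2 : HasSum (f ∘ (Subtype.val : Set.range (Sum.inr : β → α ⊕ β) → α ⊕ β)) B := by
    rw [← (Equiv.ofInjective _ (Sum.inr_injective : Function.Injective
      (Sum.inr : β → α ⊕ β))).hasSum_iff]
    exact hb
  exact HasSum.add_isCompl Set.isCompl_range_inl_range_inr h1 h2

/-- split `ι4` into even-sum and odd-sum parts -/
def esplit : ι4 ⊕ ι4 ≃ ι4 where
  toFun := Sum.elim
    (fun w => ((w.1.1, w.1.2), (w.2.1, 2*w.2.2 - w.1.1 - w.1.2 - w.2.1)))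
    (fun w => ((w.1.1, w.1.2), (w.2.1, 2*w.2.2 + 1 - w.1.1 - w.1.2 - w.2.1)))
  invFun w := if (w.1.1 + w.1.2 + w.2.1 + w.2.2) % 2 = 0
    then .inl ((w.1.1, w.1.2), (w.2.1, (w.1.1 + w.1.2 + w.2.1 + w.2.2)/2))
    else .inr ((w.1.1, w.1.2), (w.2.1, (w.1.1 + w.1.2 + w.2.1 + w.2.2 - 1)/2))
  left_inv := by
    rintro (⟨⟨m,n⟩,⟨p,d⟩⟩|⟨⟨m,n⟩,⟨p,d⟩⟩) <;> dsimp only [Sum.elim_inl, Sum.elim_inr]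
    · rw [if_pos (by omega)]
      simp only [Sum.inl.injEq, Prod.mk.injEq, true_and, and_true]
      omega
    · rw [if_neg (by omega)]
      simp only [Sum.inr.injEq, Prod.mk.injEq, true_and, and_true]
      omega
  right_inv := by
    rintro ⟨⟨m,n⟩,⟨p,e⟩⟩
    dsimp only
    by_cases h : (m + n + p + e) % 2 = 0
    · rw [if_pos h]
      dsimp only [Sum.elim_inl]
      simp only [Prod.mk.injEq, true_and, and_true]
      omega
    · rw [if_neg h]
      dsimp only [Sum.elim_inr]
      simp only [Prod.mk.injEq, true_and, and_true]
      omega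

set_option maxHeartbeats 1000000 in
lemma tsum_esplit (f : ι4 → ℂ) (hf : Summable f) :
    ∑' w, f w = (∑' w, f (esplit (Sum.inl w))) + ∑' w, f (esplit (Sum.inr w)) := by
  rw [← esplit.tsum_eq f]
  have hs : Summable (f ∘ esplit) := hf.comp_injective esplit.injective
  have h1 : Summable fun w : ι4 => f (esplit (Sum.inl w)) :=
    hs.comp_injective Sum.inl_injective
  have h2 : Summable fun w : ι4 => f (esplit (Sum.inr w)) :=
    hs.comp_injective Sum.inr_injective
  exact (hasSum_sumType h1.hasSum h2.hasSum).tsum_eq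

def ψ₁ : ι4 ≃ ι4 where
  toFun w := ((w.2.2, w.1.2 + w.2.1 - w.2.2), (w.1.1 + w.1.2 - w.2.2, w.1.2))
  invFun w := ((w.1.1 + w.2.1 - w.2.2, w.2.2), (w.1.1 + w.1.2 - w.2.2, w.1.1))
  left_inv := by rintro ⟨⟨m,n⟩,⟨p,d⟩⟩; dsimp only; simp only [Prod.mk.injEq, true_and, and_true]; omega
  right_inv := by rintro ⟨⟨m,n⟩,⟨p,d⟩⟩; dsimp only; simp only [Prod.mk.injEq, true_and, and_true]; omega

def ψ₂ : ι4 ≃ ι4 where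
  toFun w := ((w.2.2, w.1.2 + w.2.1 - w.2.2 - 1), (w.1.1 + w.1.2 - w.2.2 - 1, w.1.2 - 1))
  invFun w := ((w.2.1 + w.1.1 - w.2.2, w.2.2 + 1), (w.1.2 + w.1.1 - w.2.2, w.1.1))
  left_inv := by rintro ⟨⟨m,n⟩,⟨p,d⟩⟩; dsimp only; simp only [Prod.mk.injEq, true_and, and_true]; omega
  right_inv := by rintro ⟨⟨m,n⟩,⟨p,d⟩⟩; dsimp only; simp only [Prod.mk.injEq, true_and, and_true]; omega

def ψ₃ : ι4 ≃ ι4 where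
  toFun w := ((w.2.2 - w.2.1, w.1.1 + w.1.2 + w.2.1 - w.2.2 - 1), (w.2.2 - w.1.1, w.2.2 - 1))
  invFun w := ((w.2.2 + 1 - w.2.1, w.1.1 + w.1.2 + w.2.1 - w.2.2), (w.2.2 + 1 - w.1.1, w.2.2 + 1))
  left_inv := by rintro ⟨⟨m,n⟩,⟨p,d⟩⟩; dsimp only; simp only [Prod.mk.injEq, true_and, and_true]; omega
  right_inv := by rintro ⟨⟨m,n⟩,⟨p,d⟩⟩; dsimp only; simp only [Prod.mk.injEq, true_and, and_true]; omega


lemma neg_one_zpow_even (t : ℤ) : (-1 : ℂ)^(2*t) = 1 := by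
  rw [zpow_mul]; norm_num
lemma neg_one_zpow_odd (t : ℤ) : (-1 : ℂ)^(2*t+1) = -1 := by
  rw [zpow_add₀ (by norm_num : (-1:ℂ) ≠ 0), neg_one_zpow_even, zpow_one, one_mul]

lemma tt_mul4 (q : ℂ) (hq0 : q ≠ 0) (z₁ z₂ z₃ z₄ : ℂ) (ε₁ ε₂ ε₃ ε₄ n₁ n₂ n₃ n₄ : ℤ) :
    (tt q z₁ ε₁ n₁ * tt q z₂ ε₂ n₂) * (tt q z₃ ε₃ n₃ * tt q z₄ ε₄ n₄) =
      (-1 : ℂ)^(n₁+n₂+n₃+n₄) *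
      (q ^ ((((2*n₁+ε₁:ℤ):ℂ)^2 + ((2*n₂+ε₂:ℤ):ℂ)^2 + ((2*n₃+ε₃:ℤ):ℂ)^2 + ((2*n₄+ε₄:ℤ):ℂ)^2)/4) *
      Complex.exp ((((2*n₁+ε₁:ℤ):ℂ)*z₁ + ((2*n₂+ε₂:ℤ):ℂ)*z₂ + ((2*n₃+ε₃:ℤ):ℂ)*z₃ + ((2*n₄+ε₄:ℤ):ℂ)*z₄) * I)) := by
  have hm1 : (-1 : ℂ) ≠ 0 := by norm_num
  rw [zpow_add₀ hm1, zpow_add₀ hm1, zpow_add₀ hm1]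
  rw [show ((((2*n₁+ε₁:ℤ):ℂ)^2 + ((2*n₂+ε₂:ℤ):ℂ)^2 + ((2*n₃+ε₃:ℤ):ℂ)^2 + ((2*n₄+ε₄:ℤ):ℂ)^2)/4)
      = (((2*n₁+ε₁:ℤ):ℂ)/2)^2 + ((((2*n₂+ε₂:ℤ):ℂ)/2)^2 + ((((2*n₃+ε₃:ℤ):ℂ)/2)^2 + (((2*n₄+ε₄:ℤ):ℂ)/2)^2)) by ring]
  rw [Complex.cpow_add _ _ hq0, Complex.cpow_add _ _ hq0, Complex.cpow_add _ _ hq0]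
  rw [show ((((2*n₁+ε₁:ℤ):ℂ)*z₁ + ((2*n₂+ε₂:ℤ):ℂ)*z₂ + ((2*n₃+ε₃:ℤ):ℂ)*z₃ + ((2*n₄+ε₄:ℤ):ℂ)*z₄) * I)
      = ((2*n₁+ε₁:ℤ):ℂ)*I*z₁ + (((2*n₂+ε₂:ℤ):ℂ)*I*z₂ + (((2*n₃+ε₃:ℤ):ℂ)*I*z₃ + ((2*n₄+ε₄:ℤ):ℂ)*I*z₄)) by ring]
  rw [Complex.exp_add, Complex.exp_add, Complex.exp_add]
  simp only [tt, mt]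
  ring

end ThetaAux

namespace ThetaAux

variable (q u v a : ℂ)

noncomputable def Pt (ε : ℤ) (w : ι4) : ℂ :=
  (tt q u ε w.1.1 * tt q v ε w.1.2) * (tt q (a-u) ε w.2.1 * tt q (a-v) ε w.2.2)

noncomputable def Qt (w : ι4) : ℂ :=
  (tt q 0 0 w.1.1 * tt q a 0 w.1.2) * (tt q (u+v-a) 0 w.2.1 * tt q (u-v) 0 w.2.2)

lemma P1 (hq0 : q ≠ 0) (w : ι4) :
    Qt q u v a (esplit (Sum.inl w)) = Pt q u v a 0 (esplit (Sum.inl (ψ₁ w))) := by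
  obtain ⟨⟨m,n⟩,⟨p,d⟩⟩ := w
  have e1 : esplit (Sum.inl ((m,n),(p,d))) = ((m,n),(p, 2*d-m-n-p)) := rfl
  have e2 : esplit (Sum.inl (ψ₁ ((m,n),(p,d))))
      = ((d, n+p-d),(m+n-d, 2*n - d - (n+p-d) - (m+n-d))) := rfl
  rw [e1, e2, Qt, Pt]
  dsimp only
  rw [tt_mul4 q hq0, tt_mul4 q hq0]
  rw [show m + n + p + (2*d-m-n-p) = 2*d by ring, neg_one_zpow_even,
    show d + (n+p-d) + (m+n-d) + (2*n - d - (n+p-d) - (m+n-d)) = 2*n by ring,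
    neg_one_zpow_even, one_mul, one_mul]
  congr 2
  · push_cast; ring
  · push_cast; ring

lemma P2 (hq0 : q ≠ 0) (w : ι4) :
    Qt q u v a (esplit (Sum.inr w)) = -Pt q u v a 1 (esplit (Sum.inl (ψ₂ w))) := by
  obtain ⟨⟨m,n⟩,⟨p,d⟩⟩ := w
  have e1 : esplit (Sum.inr ((m,n),(p,d))) = ((m,n),(p, 2*d+1-m-n-p)) := rfl
  have e2 : esplit (Sum.inl (ψ₂ ((m,n),(p,d))))
      = ((d, n+p-d-1),(m+n-d-1, 2*(n-1) - d - (n+p-d-1) - (m+n-d-1))) := rfl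
  rw [e1, e2, Qt, Pt]
  dsimp only
  rw [tt_mul4 q hq0, tt_mul4 q hq0]
  rw [show m + n + p + (2*d+1-m-n-p) = 2*d+1 by ring, neg_one_zpow_odd,
    show d + (n+p-d-1) + (m+n-d-1) + (2*(n-1) - d - (n+p-d-1) - (m+n-d-1)) = 2*(n-1) by ring,
    neg_one_zpow_even, one_mul]
  rw [neg_one_mul, neg_inj]
  congr 2
  · push_cast; ring
  · push_cast; ring

lemma P3 (hq0 : q ≠ 0) (w : ι4) :
    Pt q u v a 0 (esplit (Sum.inr w)) = Pt q u v a 1 (esplit (Sum.inr (ψ₃ w))) := by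
  obtain ⟨⟨m,n⟩,⟨p,d⟩⟩ := w
  have e1 : esplit (Sum.inr ((m,n),(p,d))) = ((m,n),(p, 2*d+1-m-n-p)) := rfl
  have e2 : esplit (Sum.inr (ψ₃ ((m,n),(p,d))))
      = ((d-p, m+n+p-d-1),(d-m, 2*(d-1)+1 - (d-p) - (m+n+p-d-1) - (d-m))) := rfl
  rw [e1, e2, Pt, Pt]
  dsimp only
  rw [tt_mul4 q hq0, tt_mul4 q hq0]
  rw [show m + n + p + (2*d+1-m-n-p) = 2*d+1 by ring, neg_one_zpow_odd,
    show (d-p) + (m+n+p-d-1) + (d-m) + (2*(d-1)+1 - (d-p) - (m+n+p-d-1) - (d-m)) = 2*(d-1)+1 by ring,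
    neg_one_zpow_odd]
  congr 3
  · push_cast; ring
  · push_cast; ring

end ThetaAux

namespace ThetaAux

section Assembly

variable (q u v a : ℂ)

lemma norm_sum12 (hq0 : q ≠ 0) (hq : ‖q‖ < 1) (z₁ z₂ : ℂ) (ε : ℤ) :
    Summable fun p : ℤ × ℤ => ‖tt q z₁ ε p.1 * tt q z₂ ε p.2‖ :=
  Summable.mul_norm (summable_norm_tt q hq0 hq z₁ ε) (summable_norm_tt q hq0 hq z₂ ε)

set_option maxHeartbeats 1000000 in
lemma norm_sum4 (hq0 : q ≠ 0) (hq : ‖q‖ < 1) (z₁ z₂ z₃ z₄ : ℂ) (ε : ℤ) :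
    Summable fun w : ι4 =>
      ‖(tt q z₁ ε w.1.1 * tt q z₂ ε w.1.2) * (tt q z₃ ε w.2.1 * tt q z₄ ε w.2.2)‖ := by
  have h := Summable.mul_norm (f := fun p : ℤ × ℤ => tt q z₁ ε p.1 * tt q z₂ ε p.2)
    (g := fun p : ℤ × ℤ => tt q z₃ ε p.1 * tt q z₄ ε p.2)
    (norm_sum12 q hq0 hq z₁ z₂ ε) (norm_sum12 q hq0 hq z₃ z₄ ε)
  exact h

lemma summable_Pt (hq0 : q ≠ 0) (hq : ‖q‖ < 1) (ε : ℤ) :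
    Summable (Pt q u v a ε) :=
  (norm_sum4 q hq0 hq u v (a-u) (a-v) ε).of_norm

lemma summable_Qt (hq0 : q ≠ 0) (hq : ‖q‖ < 1) :
    Summable (Qt q u v a) :=
  (norm_sum4 q hq0 hq 0 a (u+v-a) (u-v) 0).of_norm

lemma prod4_eq (hq0 : q ≠ 0) (hq : ‖q‖ < 1) (z₁ z₂ z₃ z₄ : ℂ) (ε : ℤ) :
    (∑' n : ℤ, tt q z₁ ε n) * (∑' n : ℤ, tt q z₂ ε n) *
      ((∑' n : ℤ, tt q z₃ ε n) * (∑' n : ℤ, tt q z₄ ε n)) =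
    ∑' w : ι4, (tt q z₁ ε w.1.1 * tt q z₂ ε w.1.2) * (tt q z₃ ε w.2.1 * tt q z₄ ε w.2.2) := by
  rw [tsum_mul_tsum_of_summable_norm (summable_norm_tt q hq0 hq z₁ ε)
      (summable_norm_tt q hq0 hq z₂ ε),
    tsum_mul_tsum_of_summable_norm (summable_norm_tt q hq0 hq z₃ ε)
      (summable_norm_tt q hq0 hq z₄ ε),
    tsum_mul_tsum_of_summable_norm (norm_sum12 q hq0 hq z₁ z₂ ε)
      (norm_sum12 q hq0 hq z₃ z₄ ε)]

lemma sum4_eq (hq0 : q ≠ 0) (hq : ‖q‖ < 1) :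
    thetaJ₄ q u * thetaJ₄ q v * thetaJ₄ q (a-u) * thetaJ₄ q (a-v)
      = ∑' w : ι4, Pt q u v a 0 w := by
  rw [theta4_eq q hq0 hq u, theta4_eq q hq0 hq v, theta4_eq q hq0 hq (a-u),
    theta4_eq q hq0 hq (a-v), mul_assoc, mul_assoc, ← mul_assoc ((∑' n : ℤ, tt q v 0 n))]
  rw [← mul_assoc, ← mul_assoc, mul_assoc ((∑' n : ℤ, tt q u 0 n) * (∑' n : ℤ, tt q v 0 n))]
  rw [prod4_eq q hq0 hq u v (a-u) (a-v) 0]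
  rfl

lemma sum1_eq (hq0 : q ≠ 0) (hq : ‖q‖ < 1) :
    thetaJ₁ q u * thetaJ₁ q v * thetaJ₁ q (a-u) * thetaJ₁ q (a-v)
      = ∑' w : ι4, Pt q u v a 1 w := by
  rw [theta1_eq q hq0 hq u, theta1_eq q hq0 hq v, theta1_eq q hq0 hq (a-u),
    theta1_eq q hq0 hq (a-v)]
  have hI : (-I) * (-I) * ((-I) * (-I)) = 1 := by
    rw [neg_mul_neg, Complex.I_mul_I]; norm_num
  rw [show (-I * (∑' n : ℤ, tt q u 1 n)) * (-I * (∑' n : ℤ, tt q v 1 n)) *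
      (-I * (∑' n : ℤ, tt q (a-u) 1 n)) * (-I * (∑' n : ℤ, tt q (a-v) 1 n))
      = ((-I) * (-I) * ((-I) * (-I))) *
        ((∑' n : ℤ, tt q u 1 n) * (∑' n : ℤ, tt q v 1 n) *
          ((∑' n : ℤ, tt q (a-u) 1 n) * (∑' n : ℤ, tt q (a-v) 1 n))) by ring,
    hI, one_mul, prod4_eq q hq0 hq u v (a-u) (a-v) 1]
  rfl

lemma sumQ_eq (hq0 : q ≠ 0) (hq : ‖q‖ < 1) :
    thetaJ₄ q 0 * thetaJ₄ q a * thetaJ₄ q (u-v) * thetaJ₄ q (a-u-v)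
      = ∑' w : ι4, Qt q u v a w := by
  rw [show a-u-v = -(u+v-a) by ring, theta4_even]
  rw [theta4_eq q hq0 hq 0, theta4_eq q hq0 hq a, theta4_eq q hq0 hq (u-v),
    theta4_eq q hq0 hq (u+v-a)]
  rw [show (∑' n : ℤ, tt q 0 0 n) * (∑' n : ℤ, tt q a 0 n) * (∑' n : ℤ, tt q (u-v) 0 n) *
      (∑' n : ℤ, tt q (u+v-a) 0 n)
      = (∑' n : ℤ, tt q 0 0 n) * (∑' n : ℤ, tt q a 0 n) *
        ((∑' n : ℤ, tt q (u+v-a) 0 n) * (∑' n : ℤ, tt q (u-v) 0 n)) by ring,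
    prod4_eq q hq0 hq 0 a (u+v-a) (u-v) 0]
  rfl

lemma core_eq (hq0 : q ≠ 0) (hq : ‖q‖ < 1) :
    (∑' w : ι4, Pt q u v a 0 w) - (∑' w : ι4, Pt q u v a 1 w)
      = ∑' w : ι4, Qt q u v a w := by
  rw [tsum_esplit _ (summable_Pt q u v a hq0 hq 0),
    tsum_esplit _ (summable_Pt q u v a hq0 hq 1),
    tsum_esplit _ (summable_Qt q u v a hq0 hq)]
  have hQ1 : ∑' w : ι4, Qt q u v a (esplit (Sum.inl w))
      = ∑' w : ι4, Pt q u v a 0 (esplit (Sum.inl w)) := by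
    rw [tsum_congr (fun w => P1 q u v a hq0 w)]
    exact ψ₁.tsum_eq fun w => Pt q u v a 0 (esplit (Sum.inl w))
  have hQ2 : ∑' w : ι4, Qt q u v a (esplit (Sum.inr w))
      = -∑' w : ι4, Pt q u v a 1 (esplit (Sum.inl w)) := by
    rw [tsum_congr (fun w => P2 q u v a hq0 w), tsum_neg]
    congr 1
    exact ψ₂.tsum_eq fun w => Pt q u v a 1 (esplit (Sum.inl w))
  have hO : ∑' w : ι4, Pt q u v a 0 (esplit (Sum.inr w))
      = ∑' w : ι4, Pt q u v a 1 (esplit (Sum.inr w)) := by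
    rw [tsum_congr (fun w => P3 q u v a hq0 w)]
    exact ψ₃.tsum_eq fun w => Pt q u v a 1 (esplit (Sum.inr w))
  rw [hQ1, hQ2, hO]
  ring

end Assembly

end ThetaAux

open ThetaAux in
/-- Baxter's first theta addition formula (15.4.25):
`ϑ₄(u)ϑ₄(v)ϑ₄(a−u)ϑ₄(a−v) − ϑ₁(u)ϑ₁(v)ϑ₁(a−u)ϑ₁(a−v) = ϑ₄(0)ϑ₄(a)ϑ₄(u−v)ϑ₄(a−u−v)`. -/
theorem theta_addition_formula_first (q : ℂ) (hq : ‖q‖ < 1) (u v a : ℂ) :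
    thetaJ₄ q u * thetaJ₄ q v * thetaJ₄ q (a - u) * thetaJ₄ q (a - v)
      - thetaJ₁ q u * thetaJ₁ q v * thetaJ₁ q (a - u) * thetaJ₁ q (a - v)
    = thetaJ₄ q 0 * thetaJ₄ q a * thetaJ₄ q (u - v) * thetaJ₄ q (a - u - v) := by
  by_cases hq0 : q = 0
  · subst hq0
    have h1 : ∀ z : ℂ, thetaJ₁ 0 z = 0 := by
      intro z
      have : ∀ n : ℕ, (-1 : ℂ) ^ n * (0:ℂ) ^ (((n : ℂ) + 1/2) ^ 2) *
          Complex.sin ((2 * (n : ℂ) + 1) * z) = 0 := by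
        intro n
        rw [Complex.zero_cpow]
        · ring
        · apply pow_ne_zero
          intro h
          have := congrArg Complex.re h
          simp at this
          nlinarith [this, (Nat.cast_nonneg n : (0:ℝ) ≤ (n:ℝ))]
      rw [thetaJ₁, tsum_congr this, tsum_zero, mul_zero]
    have h4 : ∀ z : ℂ, thetaJ₄ 0 z = 1 := by
      intro z
      have : ∀ n : ℕ, (-1 : ℂ) ^ (n+1) * (0:ℂ) ^ (((n : ℂ) + 1) ^ 2) *
          Complex.cos (2 * ((n : ℂ) + 1) * z) = 0 := by
        intro n
        rw [Complex.zero_cpow]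
        · ring
        · apply pow_ne_zero
          intro h
          have := congrArg Complex.re h
          simp at this
          nlinarith [this, (Nat.cast_nonneg n : (0:ℝ) ≤ (n:ℝ))]
      rw [thetaJ₄, tsum_congr this, tsum_zero, mul_zero, add_zero]
    rw [h1, h1, h1, h1, h4, h4, h4, h4, h4, h4, h4, h4]
    norm_num
  · rw [sum4_eq q u v a hq0 hq, sum1_eq q u v a hq0 hq, sumQ_eq q u v a hq0 hq]
    exact core_eq q u v a hq0 hq
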